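/- arXiv:0907.0108 — 4 statements merged into one kernel-verified Lean document; each statement's English description precedes it below -/
import Mathlib

section
/- Let H be a self-adjoint operator on ℋ with pairwise distinct eigenvalues E₁,…,E_D and orthonormal eigenbasis φ₁,…,φ_D, let ψ₀ ∈ ℋ with ‖ψ₀‖ = 1, and set c_α := ⟨φ_α, ψ₀⟩. Then for all vectors χ, χ' ∈ ℋ, the time average lim_{T→∞} (1/T)·∫₀^T ⟨χ, ψ_t⟩·conj(⟨χ', ψ_t⟩) dt exists and equals Σ_{α=1}^D |c_α|²·⟨χ, φ_α⟩·conj(⟨χ', φ_α⟩); that is, the time average of the rank-one operator |ψ_t⟩⟨ψ_t| is Σ_α |c_α|²·|φ_α⟩⟨φ_α|. -/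
/-! In the eigenbasis, `ψ_t = Σ_α e^{-iE_α t} c_α φ_α`, so `⟨χ, ψ_t⟩ conj ⟨χ', ψ_t⟩` is a
trigonometric polynomial in `t` with frequencies `E_β - E_α`. The time average of `e^{iωt}` is
`1` if `ω = 0` and `0` otherwise, and since the spectrum is non-degenerate only the diagonal
terms `α = β` survive. -/

open MeasureTheory Filter

noncomputable section

/-- Time evolution `ψ_t = exp(−iHt)ψ₀` for a (continuous linear) operator `H`. -/
def timeEvolved (D : ℕ) (H : EuclideanSpace ℂ (Fin D) →L[ℂ] EuclideanSpace ℂ (Fin D))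
    (ψ₀ : EuclideanSpace ℂ (Fin D)) (t : ℝ) : EuclideanSpace ℂ (Fin D) :=
  NormedSpace.exp ((-(t : ℂ) * Complex.I) • H) ψ₀

open Topology
open scoped InnerProductSpace ComplexConjugate

namespace NormedSpace

variable {𝕂 F : Type*} [RCLike 𝕂] [NormedAddCommGroup F] [NormedSpace 𝕂 F] [CompleteSpace F]

theorem exp_apply_of_apply_eq_smul {A : F →L[𝕂] F} {μ : 𝕂} {x : F} (hx : A x = μ • x) :
    exp A x = exp μ • x := by
  have hpow (n : ℕ) : (A ^ n) x = μ ^ n • x := by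
    induction n with
    | zero => simp
    | succ n ih => rw [pow_succ', mul_apply_eq_comp, ih, map_smul, hx, smul_smul, pow_succ]
  have hA := (exp_series_hasSum_exp' (𝕂 := 𝕂) A).mapL (ContinuousLinearMap.apply 𝕂 F x)
  have hμ := (exp_series_hasSum_exp' (𝕂 := 𝕂) μ).smul_const x
  refine hA.unique ?_
  simpa only [ContinuousLinearMap.apply_apply, smul_apply, hpow, smul_smul,
    smul_eq_mul] using hμ

end NormedSpace

section

variable {ι 𝕂 F : Type*} [Fintype ι] [RCLike 𝕂] [NormedAddCommGroup F] [InnerProductSpace 𝕂 F]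
  [CompleteSpace F]

theorem OrthonormalBasis.exp_apply_of_apply_eq_smul (φ : OrthonormalBasis ι 𝕂 F) {A : F →L[𝕂] F}
    {μ : ι → 𝕂} (hA : ∀ α, A (φ α) = μ α • φ α) (x : F) :
    NormedSpace.exp A x = ∑ α, (NormedSpace.exp (μ α) * ⟪φ α, x⟫_𝕂) • φ α := by
  conv_lhs => rw [← φ.sum_repr' x]
  simp only [map_sum, map_smul, NormedSpace.exp_apply_of_apply_eq_smul (hA _), smul_smul,
    mul_comm]

end

open Complex

theorem tendsto_average_exp_ofReal_mul_I (ω : ℝ) :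
    Tendsto (fun T : ℝ => (T : ℂ)⁻¹ * ∫ t in (0 : ℝ)..T, exp (ω * I * t)) atTop
      (𝓝 (if ω = 0 then 1 else 0)) := by
  split_ifs with hω
  · refine tendsto_const_nhds.congr' ?_
    filter_upwards [eventually_ne_atTop 0] with T hT
    simp [hω, hT]
  have hc : (ω : ℂ) * I ≠ 0 := by simp [hω]
  apply squeeze_zero_norm' (a := fun T : ℝ => T⁻¹ * (2 / ‖(ω : ℂ) * I‖))
  · filter_upwards [eventually_gt_atTop 0] with T hT
    have hnorm (s : ℝ) : ‖exp (ω * I * s)‖ = 1 := by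
      rw [norm_exp]
      simp [mul_comm]
    rw [integral_exp_mul_complex hc, norm_mul, norm_inv, norm_div, norm_real,
      Real.norm_of_nonneg hT.le]
    gcongr
    exact (norm_sub_le _ _).trans (by rw [hnorm, hnorm]; norm_num)
  · simpa using tendsto_inv_atTop_zero.mul_const (2 / ‖(ω : ℂ) * I‖)

theorem tendsto_average_sum_mul_exp {ι : Type*} (s : Finset ι) (a : ι → ℂ) (ω : ι → ℝ) :
    Tendsto (fun T : ℝ => (T : ℂ)⁻¹ * ∫ t in (0 : ℝ)..T, ∑ k ∈ s, a k * exp (ω k * I * t))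
      atTop (𝓝 (∑ k ∈ s with ω k = 0, a k)) := by
  have hint (k : ι) (T : ℝ) :
      IntervalIntegrable (fun t : ℝ => a k * exp (ω k * I * t)) volume 0 T :=
    (by fun_prop : Continuous fun t : ℝ => a k * exp (ω k * I * t)).intervalIntegrable _ _
  have hsplit (T : ℝ) : (T : ℂ)⁻¹ * ∫ t in (0 : ℝ)..T, ∑ k ∈ s, a k * exp (ω k * I * t)
      = ∑ k ∈ s, a k * ((T : ℂ)⁻¹ * ∫ t in (0 : ℝ)..T, exp (ω k * I * t)) := by
    rw [intervalIntegral.integral_finsetSum fun k _ => hint k T, Finset.mul_sum]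
    simp only [intervalIntegral.integral_const_mul, mul_left_comm]
  rw [Finset.sum_filter, funext hsplit]
  refine tendsto_finsetSum s fun k _ => ?_
  simpa using (tendsto_average_exp_ofReal_mul_I (ω k)).const_mul (a k)

theorem sum_exp_mul_mul_conj_sum_exp_mul {ι : Type*} [Fintype ι] (E : ι → ℝ) (a b : ι → ℂ)
    (t : ℝ) :
    (∑ α, exp (-t * I * E α) * a α) * conj (∑ β, exp (-t * I * E β) * b β)
      = ∑ p : ι × ι, a p.1 * conj (b p.2) * exp (↑(E p.2 - E p.1) * I * t) := by
  rw [map_sum, Finset.sum_mul_sum, ← Finset.univ_product_univ, Finset.sum_product]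
  refine Finset.sum_congr rfl fun α _ => Finset.sum_congr rfl fun β _ => ?_
  have hexp : exp (-t * I * E α) * conj (exp (-t * I * E β)) = exp (↑(E β - E α) * I * t) := by
    rw [← exp_conj, ← exp_add]
    congr 1
    simp only [map_mul, map_neg, conj_ofReal, conj_I]
    push_cast
    ring
  rw [map_mul, ← hexp]
  ring

theorem inner_timeEvolved {D : ℕ} {H : EuclideanSpace ℂ (Fin D) →L[ℂ] EuclideanSpace ℂ (Fin D)}
    {E : Fin D → ℝ} (φ : OrthonormalBasis (Fin D) ℂ (EuclideanSpace ℂ (Fin D)))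
    (hEigen : ∀ α, H (φ α) = (E α : ℂ) • φ α) (ψ₀ v : EuclideanSpace ℂ (Fin D)) (t : ℝ) :
    ⟪v, timeEvolved D H ψ₀ t⟫_ℂ = ∑ α, exp (-t * I * E α) * (⟪φ α, ψ₀⟫_ℂ * ⟪v, φ α⟫_ℂ) := by
  have hA (α : Fin D) : ((-(t : ℂ) * I) • H) (φ α) = (-t * I * E α) • φ α := by
    rw [smul_apply, hEigen, smul_smul]
  rw [timeEvolved, φ.exp_apply_of_apply_eq_smul hA, inner_sum]
  simp only [inner_smul_right, ← exp_eq_exp_ℂ, mul_assoc]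

theorem time_average_rank_one_general (D : ℕ)
    (H : EuclideanSpace ℂ (Fin D) →L[ℂ] EuclideanSpace ℂ (Fin D))
    (E : Fin D → ℝ) (hE : Function.Injective E)
    (φ : OrthonormalBasis (Fin D) ℂ (EuclideanSpace ℂ (Fin D)))
    (hEigen : ∀ α, H (φ α) = (E α : ℂ) • φ α)
    (ψ₀ : EuclideanSpace ℂ (Fin D))
    (c : Fin D → ℂ) (hc : ∀ α, c α = inner ℂ (φ α) ψ₀)
    (χ χ' : EuclideanSpace ℂ (Fin D)) :
    Tendsto
      (fun T : ℝ => (T : ℂ)⁻¹ *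
        ∫ t in (0:ℝ)..T,
          (inner ℂ χ (timeEvolved D H ψ₀ t) : ℂ) *
            (starRingEnd ℂ) (inner ℂ χ' (timeEvolved D H ψ₀ t) : ℂ))
      atTop
      (nhds (∑ α : Fin D, (‖c α‖ ^ 2 : ℂ) *
        (inner ℂ χ (φ α) : ℂ) * (starRingEnd ℂ) (inner ℂ χ' (φ α) : ℂ))) := by
  set a : Fin D × Fin D → ℂ := fun p => c p.1 * ⟪χ, φ p.1⟫_ℂ * conj (c p.2 * ⟪χ', φ p.2⟫_ℂ)
  have hintegrand (t : ℝ) :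
      ⟪χ, timeEvolved D H ψ₀ t⟫_ℂ * conj ⟪χ', timeEvolved D H ψ₀ t⟫_ℂ
        = ∑ p, a p * exp (↑(E p.2 - E p.1) * I * t) := by
    simp only [inner_timeEvolved φ hEigen, ← hc]
    exact sum_exp_mul_mul_conj_sum_exp_mul E _ _ t
  have hresonant : ∑ p with E p.2 - E p.1 = 0, a p
      = ∑ α, (‖c α‖ ^ 2 : ℂ) * ⟪χ, φ α⟫_ℂ * conj ⟪χ', φ α⟫_ℂ := by
    simp only [sub_eq_zero, hE.eq_iff, Finset.sum_filter, Fintype.sum_prod_type,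
      Finset.sum_ite_eq', Finset.mem_univ, if_true]
    refine Finset.sum_congr rfl fun α _ => ?_
    simp only [a, map_mul, ← mul_conj']
    ring
  rw [← hresonant]
  simpa only [hintegrand] using tendsto_average_sum_mul_exp Finset.univ a fun p => E p.2 - E p.1

/-- for a non-degenerate self-adjoint `H` with orthonormal eigenbasis `φ`,
the time average of `⟨χ, ψ_t⟩ · conj ⟨χ', ψ_t⟩` exists and equals
`Σ_α |c_α|² ⟨χ, φ_α⟩ conj ⟨χ', φ_α⟩`; i.e. the time average of `|ψ_t⟩⟨ψ_t|` is
`Σ_α |c_α|² |φ_α⟩⟨φ_α|`. -/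
theorem time_average_rank_one (D : ℕ) (hD : 1 ≤ D)
    (H : EuclideanSpace ℂ (Fin D) →L[ℂ] EuclideanSpace ℂ (Fin D))
    (hH : IsSelfAdjoint H)
    (E : Fin D → ℝ) (hE : Function.Injective E)
    (φ : OrthonormalBasis (Fin D) ℂ (EuclideanSpace ℂ (Fin D)))
    (hEigen : ∀ α, H (φ α) = (E α : ℂ) • φ α)
    (ψ₀ : EuclideanSpace ℂ (Fin D)) (hψ₀ : ‖ψ₀‖ = 1)
    (c : Fin D → ℂ) (hc : ∀ α, c α = inner ℂ (φ α) ψ₀)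
    (χ χ' : EuclideanSpace ℂ (Fin D)) :
    Tendsto
      (fun T : ℝ => (T : ℂ)⁻¹ *
        ∫ t in (0:ℝ)..T,
          (inner ℂ χ (timeEvolved D H ψ₀ t) : ℂ) *
            (starRingEnd ℂ) (inner ℂ χ' (timeEvolved D H ψ₀ t) : ℂ))
      atTop
      (nhds (∑ α : Fin D, (‖c α‖ ^ 2 : ℂ) *
        (inner ℂ χ (φ α) : ℂ) * (starRingEnd ℂ) (inner ℂ χ' (φ α) : ℂ))) :=
  time_average_rank_one_general D H E hE φ hEigen ψ₀ c hc χ χ'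

end
end

section
/- Let H be self-adjoint on ℋ, 𝒟 = {ℋ_ν} an orthogonal decomposition, ψ₀ a unit vector, and ε, δ' > 0. If for every ν, limsup_{T→∞} (1/T)·∫₀^T (‖P_ν ψ_t‖² − d_ν/D)² dt < ε²·(d_ν/(N·D))·(δ'/N), then the system (H, 𝒟, ψ₀) is ε-δ'-normal in von Neumann's sense. -/
open MeasureTheory Filter

noncomputable section

/-- `p t` holds for `(1−δ')`-most times `t` in the long run. -/
def mostTimes (δ' : ℝ) (p : ℝ → Prop) : Prop :=
  1 - δ' ≤ liminf (fun T : ℝ =>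
    (volume {t : ℝ | t ∈ Set.Ioo 0 T ∧ p t}).toReal / T) atTop

/-- The system `(H, 𝒟, ψ₀)` is `ε`-`δ'`-normal in von Neumann's sense. -/
def normalVN (D N : ℕ) (H : EuclideanSpace ℂ (Fin D) →L[ℂ] EuclideanSpace ℂ (Fin D))
    (V : Fin N → Submodule ℂ (EuclideanSpace ℂ (Fin D))) (dv : Fin N → ℕ)
    (ψ₀ : EuclideanSpace ℂ (Fin D)) (ε δ' : ℝ) : Prop :=
  mostTimes δ' (fun t => ∀ ν : Fin N,
    |‖((V ν).orthogonalProjectionOnto (timeEvolved D H ψ₀ t) : EuclideanSpace ℂ (Fin D))‖ ^ 2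
        - (dv ν : ℝ) / D|
      < ε * Real.sqrt ((dv ν : ℝ) / (N * D)))

/-- The system `(H, 𝒟, ψ₀)` is `ε`-`δ'`-normal in the strong sense. -/
def normalStrong (D N : ℕ) (H : EuclideanSpace ℂ (Fin D) →L[ℂ] EuclideanSpace ℂ (Fin D))
    (V : Fin N → Submodule ℂ (EuclideanSpace ℂ (Fin D))) (dv : Fin N → ℕ)
    (ψ₀ : EuclideanSpace ℂ (Fin D)) (ε δ' : ℝ) : Prop :=
  mostTimes δ' (fun t => ∀ ν : Fin N,
    |‖((V ν).orthogonalProjectionOnto (timeEvolved D H ψ₀ t) : EuclideanSpace ℂ (Fin D))‖ ^ 2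
        - (dv ν : ℝ) / D|
      < ε * ((dv ν : ℝ) / D))

/-! By Chebyshev's inequality, once the time average over `(0, T)` of the squared deviation
`(‖P_ν ψ_t‖² − d_ν/D)²` is below `c_ν² · δ'/N`, the deviation reaches `c_ν = ε √(d_ν/(N D))` on a
set of measure at most `T δ'/N`; a union bound over the `N` subspaces leaves a fraction `1 − δ'`
of `(0, T)` on which every deviation is below its threshold. The `limsup` hypothesis can only be
turned into such a bound for large `T` because the averages are bounded (in `ℝ` the `limsup` of an
unbounded function is a junk value); they are, since the evolution is unitary. -/

open Set

section Chebyshev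

variable {f : ℝ → ℝ} {T c : ℝ}

lemma sq_mul_volume_real_le_integral_sq (hT : 0 ≤ T) (hc : 0 ≤ c)
    (hf : IntervalIntegrable (fun t => f t ^ 2) volume 0 T) :
    c ^ 2 * volume.real {t | t ∈ Ioo 0 T ∧ c ≤ |f t|} ≤ ∫ t in (0:ℝ)..T, f t ^ 2 := by
  have markov := mul_meas_ge_le_integral_of_nonneg (μ := volume.restrict (Ioc 0 T))
    (ae_of_all _ fun t => sq_nonneg (f t)) hf.1 (c ^ 2)
  rw [measureReal_restrict_apply' measurableSet_Ioc] at markov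
  rw [intervalIntegral.integral_of_le hT]
  refine le_trans ?_ markov
  gcongr
  · exact (measure_mono inter_subset_right).trans_lt measure_Ioc_lt_top |>.ne
  · rintro t ⟨ht, hct⟩
    exact ⟨by simpa [sq_abs] using pow_le_pow_left₀ hc hct 2, Ioo_subset_Ioc_self ht⟩

lemma volume_real_le_of_average_sq_lt {a : ℝ} (hT : 0 < T) (hc : 0 ≤ c)
    (hf : IntervalIntegrable (fun t => f t ^ 2) volume 0 T)
    (havg : (1 / T) * ∫ t in (0:ℝ)..T, f t ^ 2 < c ^ 2 * a) :
    volume.real {t | t ∈ Ioo 0 T ∧ c ≤ |f t|} ≤ T * a := by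
  have hint : ∫ t in (0:ℝ)..T, f t ^ 2 < c ^ 2 * (T * a) := by
    rw [one_div, inv_mul_lt_iff₀ hT] at havg
    linarith
  have hc2 : 0 < c ^ 2 := by
    refine (sq_nonneg c).lt_of_ne fun h => ?_
    have := intervalIntegral.integral_nonneg (μ := volume) hT.le fun t _ => sq_nonneg (f t)
    rw [← h, zero_mul] at hint
    linarith
  exact le_of_mul_le_mul_left ((sq_mul_volume_real_le_integral_sq hT.le hc hf).trans hint.le) hc2

lemma isBoundedUnder_average_sq {M : ℝ} (hf : ∀ t, |f t| ≤ M) :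
    IsBoundedUnder (· ≤ ·) atTop fun T => (1 / T) * ∫ t in (0:ℝ)..T, f t ^ 2 := by
  refine isBoundedUnder_of_eventually_le (a := M ^ 2) ?_
  filter_upwards [eventually_gt_atTop 0] with T hT
  have hint : ‖∫ t in (0:ℝ)..T, f t ^ 2‖ ≤ M ^ 2 * |T - 0| :=
    intervalIntegral.norm_integral_le_of_norm_le_const fun t _ => by
      simpa [abs_of_nonneg (sq_nonneg (f t)), sq_abs] using
        pow_le_pow_left₀ (abs_nonneg (f t)) (hf t) 2
  rw [sub_zero, abs_of_pos hT, Real.norm_eq_abs] at hint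
  rw [one_div, inv_mul_le_iff₀ hT]
  linarith [le_abs_self (∫ t in (0:ℝ)..T, f t ^ 2)]

end Chebyshev

lemma measureReal_sub_sum_le_measureReal_forall {α ι : Type*} [MeasurableSpace α] [Fintype ι]
    (μ : Measure α) {s : Set α} (hs : μ s ≠ ⊤) (p : ι → α → Prop) :
    μ.real s - ∑ i, μ.real {x | x ∈ s ∧ ¬ p i x} ≤ μ.real {x | x ∈ s ∧ ∀ i, p i x} := by
  have hcover : s ⊆ {x | x ∈ s ∧ ∀ i, p i x} ∪ ⋃ i, {x | x ∈ s ∧ ¬ p i x} := by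
    intro x hx
    by_cases h : ∀ i, p i x
    · exact Or.inl ⟨hx, h⟩
    · push Not at h
      obtain ⟨i, hi⟩ := h
      exact Or.inr (mem_iUnion.2 ⟨i, hx, hi⟩)
  have hfin : μ ({x | x ∈ s ∧ ∀ i, p i x} ∪ ⋃ i, {x | x ∈ s ∧ ¬ p i x}) ≠ ⊤ :=
    ((measure_mono (union_subset (fun x hx => hx.1) (iUnion_subset fun _ x hx => hx.1))).trans_lt
      hs.lt_top).ne
  have hunion := measureReal_union_le (μ := μ) {x | x ∈ s ∧ ∀ i, p i x}
    (⋃ i, {x | x ∈ s ∧ ¬ p i x})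
  linarith [measureReal_mono hcover hfin, measureReal_iUnion_fintype_le (μ := μ)
    fun i => {x | x ∈ s ∧ ¬ p i x}]

lemma mostTimes_forall_abs_lt {ι : Type*} [Fintype ι] {g : ι → ℝ → ℝ} {c a : ι → ℝ}
    (hg : ∀ i T, IntervalIntegrable (fun t => g i t ^ 2) volume 0 T)
    (hbdd : ∀ i, IsBoundedUnder (· ≤ ·) atTop fun T => (1 / T) * ∫ t in (0:ℝ)..T, g i t ^ 2)
    (hc : ∀ i, 0 ≤ c i)
    (hG : ∀ i, limsup (fun T => (1 / T) * ∫ t in (0:ℝ)..T, g i t ^ 2) atTop < c i ^ 2 * a i) :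
    mostTimes (∑ i, a i) (fun t => ∀ i, |g i t| < c i) := by
  have hfraction_le_one : ∀ᶠ T in atTop,
      (volume {t | t ∈ Ioo 0 T ∧ ∀ i, |g i t| < c i}).toReal / T ≤ 1 := by
    filter_upwards [eventually_gt_atTop 0] with T hT
    rw [div_le_one hT, ← measureReal_def]
    exact (measureReal_mono (fun t ht => ht.1) measure_Ioo_lt_top.ne).trans_eq
      (by simp [Real.volume_real_Ioo_of_le hT.le])
  refine le_liminf_of_le (isBoundedUnder_of_eventually_le hfraction_le_one).isCoboundedUnder_ge ?_
  filter_upwards [eventually_gt_atTop 0,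
    eventually_all.2 fun i => eventually_lt_of_limsup_lt (hG i) (hbdd i)] with T hT havg
  have hbad : ∀ i, volume.real {t | t ∈ Ioo 0 T ∧ ¬ |g i t| < c i} ≤ T * a i := by
    simp only [not_lt]
    exact fun i => volume_real_le_of_average_sq_lt hT (hc i) (hg i T) (havg i)
  have hgood := measureReal_sub_sum_le_measureReal_forall volume
    (measure_Ioo_lt_top (a := 0) (b := T)).ne (fun i t => |g i t| < c i)
  rw [Real.volume_real_Ioo_of_le hT.le, sub_zero] at hgood
  rw [le_div_iff₀ hT, ← measureReal_def]
  have hbad_sum := Finset.sum_le_sum fun i (_ : i ∈ Finset.univ) => hbad i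
  rw [← Finset.mul_sum] at hbad_sum
  linarith

section Evolution

variable {D : ℕ} {H : EuclideanSpace ℂ (Fin D) →L[ℂ] EuclideanSpace ℂ (Fin D)}
  {ψ₀ : EuclideanSpace ℂ (Fin D)}

lemma continuous_timeEvolved : Continuous (timeEvolved D H ψ₀) := by
  let _ : NormedAlgebra ℚ (EuclideanSpace ℂ (Fin D) →L[ℂ] EuclideanSpace ℂ (Fin D)) :=
    .restrictScalars ℚ ℂ _
  have hexp : Continuous fun t : ℝ => NormedSpace.exp ((-(t : ℂ) * Complex.I) • H) :=
    NormedSpace.exp_continuous.comp (by fun_prop)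
  exact isBoundedBilinearMap_apply.continuous.comp (hexp.prodMk continuous_const)

lemma norm_timeEvolved (hH : IsSelfAdjoint H) (t : ℝ) :
    ‖timeEvolved D H ψ₀ t‖ = ‖ψ₀‖ := by
  have hskew : (-(t : ℂ) * Complex.I) • H ∈
      skewAdjoint (EuclideanSpace ℂ (Fin D) →L[ℂ] EuclideanSpace ℂ (Fin D)) := by
    rw [skewAdjoint.mem_iff, star_smul, hH.star_eq,
      ← (neg_smul (-(t : ℂ) * Complex.I) H : _ = -((-(t : ℂ) * Complex.I) • H))]
    congr 1
    simp
  let _ : NormedAlgebra ℚ (EuclideanSpace ℂ (Fin D) →L[ℂ] EuclideanSpace ℂ (Fin D)) :=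
    .restrictScalars ℚ ℂ _
  have hunitary := NormedSpace.exp_mem_unitary_of_mem_skewAdjoint hskew
  exact ContinuousLinearMap.norm_map_of_mem_unitary hunitary ψ₀

end Evolution

lemma abs_norm_orthogonalProjectionOnto_sq_sub_le {𝕜 E : Type*} [RCLike 𝕜] [NormedAddCommGroup E]
    [InnerProductSpace 𝕜 E] (K : Submodule 𝕜 E) [K.HasOrthogonalProjection] (v : E) {x : ℝ}
    (hx : 0 ≤ x) : |‖(K.orthogonalProjectionOnto v : E)‖ ^ 2 - x| ≤ ‖v‖ ^ 2 + x := by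
  have hP : ‖(K.orthogonalProjectionOnto v : E)‖ ^ 2 ≤ ‖v‖ ^ 2 :=
    pow_le_pow_left₀ (norm_nonneg _) (K.norm_orthogonalProjectionOnto_apply_le v) 2
  rw [abs_le]
  constructor <;> nlinarith [sq_nonneg ‖(K.orthogonalProjectionOnto v : E)‖]

theorem normality_criterion_vN_general (D N : ℕ)
    (H : EuclideanSpace ℂ (Fin D) →L[ℂ] EuclideanSpace ℂ (Fin D)) (hH : IsSelfAdjoint H)
    (V : Fin N → Submodule ℂ (EuclideanSpace ℂ (Fin D)))
    (dv : Fin N → ℕ)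
    (ψ₀ : EuclideanSpace ℂ (Fin D))
    (ε δ' : ℝ) (hε : 0 < ε) (hδ' : 0 < δ')
    (hG : ∀ ν : Fin N,
      limsup (fun T : ℝ => (1 / T) *
          ∫ t in (0:ℝ)..T,
            (‖((V ν).orthogonalProjectionOnto (timeEvolved D H ψ₀ t) :
                EuclideanSpace ℂ (Fin D))‖ ^ 2 - (dv ν : ℝ) / D) ^ 2) atTop
        < ε ^ 2 * ((dv ν : ℝ) / (N * D)) * (δ' / N)) :
    normalVN D N H V dv ψ₀ ε δ' := by
  set g : Fin N → ℝ → ℝ := fun ν t =>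
    ‖((V ν).orthogonalProjectionOnto (timeEvolved D H ψ₀ t) : EuclideanSpace ℂ (Fin D))‖ ^ 2
      - (dv ν : ℝ) / D
  have hcont : ∀ ν, Continuous (g ν) := fun ν =>
    ((continuous_subtype_val.comp ((V ν).orthogonalProjectionOnto.continuous.comp
      continuous_timeEvolved)).norm.pow 2).sub continuous_const
  have hbound : ∀ ν t, |g ν t| ≤ ‖ψ₀‖ ^ 2 + dv ν / D := fun ν t => by
    simpa only [norm_timeEvolved hH] using abs_norm_orthogonalProjectionOnto_sq_sub_le (V ν)
      (timeEvolved D H ψ₀ t) (by positivity : (0 : ℝ) ≤ dv ν / D)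
  have hgood := mostTimes_forall_abs_lt (g := g) (c := fun ν => ε * √(dv ν / (N * D)))
    (a := fun _ => δ' / N) (fun ν T => ((hcont ν).pow 2).intervalIntegrable 0 T)
    (fun ν => isBoundedUnder_average_sq (hbound ν)) (fun ν => by positivity)
    (fun ν => by rw [mul_pow, Real.sq_sqrt (by positivity)]; exact hG ν)
  have hsum : ∑ _ν : Fin N, δ' / N ≤ δ' := by
    rw [Finset.sum_const, Finset.card_univ, Fintype.card_fin, nsmul_eq_mul]
    rcases N.eq_zero_or_pos with rfl | hN
    · simpa using hδ'.le
    · exact (mul_div_cancel₀ δ' (by positivity)).le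
  exact le_trans (by linarith) hgood

/-- if for every `ν` the time average of `(‖P_ν ψ_t‖² − d_ν/D)²` is (in the
`limsup` sense) below `ε²·(d_ν/(N·D))·(δ'/N)`, then the system is `ε`-`δ'`-normal in
von Neumann's sense. -/
theorem normality_criterion_vN (D N : ℕ) (hD : 1 ≤ D)
    (H : EuclideanSpace ℂ (Fin D) →L[ℂ] EuclideanSpace ℂ (Fin D)) (hH : IsSelfAdjoint H)
    (V : Fin N → Submodule ℂ (EuclideanSpace ℂ (Fin D)))
    (horth : ∀ ν ν', ν ≠ ν' → Submodule.IsOrtho (V ν) (V ν'))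
    (hspan : (⨆ ν, V ν) = ⊤)
    (dv : Fin N → ℕ) (hdim : ∀ ν, Module.finrank ℂ (V ν) = dv ν)
    (hsum : ∑ ν, dv ν = D)
    (ψ₀ : EuclideanSpace ℂ (Fin D)) (hψ₀ : ‖ψ₀‖ = 1)
    (ε δ' : ℝ) (hε : 0 < ε) (hδ' : 0 < δ')
    (hG : ∀ ν : Fin N,
      limsup (fun T : ℝ => (1 / T) *
          ∫ t in (0:ℝ)..T,
            (‖((V ν).orthogonalProjectionOnto (timeEvolved D H ψ₀ t) :
                EuclideanSpace ℂ (Fin D))‖ ^ 2 - (dv ν : ℝ) / D) ^ 2) atTop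
        < ε ^ 2 * ((dv ν : ℝ) / (N * D)) * (δ' / N)) :
    normalVN D N H V dv ψ₀ ε δ' :=
  normality_criterion_vN_general D N H hH V dv ψ₀ ε δ' hε hδ' hG
end
end

section
/- Let 𝒟 = {ℋ_ν} be an orthogonal decomposition of ℋ, let ψ ∈ ℋ with ‖ψ‖ = 1, and let ε > 0. Suppose |‖P_ν ψ‖² − d_ν/D| < ε·√(d_ν/(N·D)) for all ν. Then for every real-linear combination A = Σ_ν α_ν P_ν with real coefficients α_ν not all zero, |⟨ψ, Aψ⟩ − tr(A)/D| < ε·√(tr(A²)/D), where tr(A) = Σ_ν α_ν·d_ν and tr(A²) = Σ_ν α_ν²·d_ν. -/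
/-!
For orthogonal projections `⟪ψ, P_ν ψ⟫ = ‖P_ν ψ‖²`, so `⟪ψ, Aψ⟫ - tr A / D` is the real sum
`∑ α_ν (‖P_ν ψ‖² - d_ν / D)`. Each deviation is below `ε √(d_ν / D) √(1 / N)`, strictly where
`α_ν ≠ 0`, and Cauchy–Schwarz bounds `∑ |α_ν| √(d_ν / D) √(1 / N)` by `√(∑ α_ν² d_ν / D)`.
-/

open Finset

theorem Real.sum_sqrt_div_card_le_sqrt_sum {ι : Type*} [Fintype ι] {f : ι → ℝ}
    (hf : ∀ i, 0 ≤ f i) : ∑ i, √(f i / Fintype.card ι) ≤ √(∑ i, f i) := by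
  have hcard : ∑ _i : ι, (1 / Fintype.card ι : ℝ) ≤ 1 := by
    rw [sum_const, card_univ, nsmul_eq_mul, mul_one_div]
    exact div_self_le_one _
  calc ∑ i, √(f i / Fintype.card ι) = ∑ i, √(f i) * √(1 / Fintype.card ι) := by
        simp_rw [← Real.sqrt_mul (hf _), mul_one_div]
    _ ≤ √(∑ i, f i) * √(∑ _i : ι, (1 / Fintype.card ι : ℝ)) :=
        Real.sum_sqrt_mul_sqrt_le _ hf fun _ ↦ by positivity
    _ ≤ √(∑ i, f i) := by
        grw [hcard, Real.sqrt_one, mul_one]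

theorem Real.sum_abs_mul_sqrt_div_card_le {ι : Type*} [Fintype ι] (a : ι → ℝ) {w : ι → ℝ}
    (hw : ∀ i, 0 ≤ w i) :
    ∑ i, |a i| * √(w i / Fintype.card ι) ≤ √(∑ i, a i ^ 2 * w i) := by
  calc ∑ i, |a i| * √(w i / Fintype.card ι) = ∑ i, √(a i ^ 2 * w i / Fintype.card ι) := by
        simp_rw [mul_div_assoc, Real.sqrt_mul (sq_nonneg _), Real.sqrt_sq_eq_abs]
    _ ≤ √(∑ i, a i ^ 2 * w i) :=
        Real.sum_sqrt_div_card_le_sqrt_sum fun i ↦ mul_nonneg (sq_nonneg _) (hw i)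

theorem abs_sum_mul_sub_sum_mul_lt {ι : Type*} [Fintype ι] {a q w : ι → ℝ} {ε : ℝ}
    (hε : 0 ≤ ε) (hw : ∀ i, 0 ≤ w i)
    (hdev : ∀ i, |q i - w i| < ε * √(w i / Fintype.card ι)) (ha : a ≠ 0) :
    |∑ i, a i * q i - ∑ i, a i * w i| < ε * √(∑ i, a i ^ 2 * w i) := by
  obtain ⟨i₀, hi₀⟩ := Function.ne_iff.mp ha
  calc |∑ i, a i * q i - ∑ i, a i * w i| = |∑ i, a i * (q i - w i)| := by
        simp_rw [mul_sub, sum_sub_distrib]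
    _ ≤ ∑ i, |a i| * |q i - w i| := by
        simpa only [abs_mul] using abs_sum_le_sum_abs (fun i ↦ a i * (q i - w i)) univ
    _ < ∑ i, |a i| * (ε * √(w i / Fintype.card ι)) :=
        sum_lt_sum (fun i _ ↦ mul_le_mul_of_nonneg_left (hdev i).le (abs_nonneg _))
          ⟨i₀, mem_univ _, mul_lt_mul_of_pos_left (hdev i₀) (abs_pos.mpr hi₀)⟩
    _ = ε * ∑ i, |a i| * √(w i / Fintype.card ι) := by
        simp_rw [mul_sum, mul_left_comm]
    _ ≤ ε * √(∑ i, a i ^ 2 * w i) := by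
        grw [Real.sum_abs_mul_sqrt_div_card_le a hw]

open scoped InnerProductSpace

section

variable {𝕜 E : Type*} [RCLike 𝕜] [NormedAddCommGroup E] [InnerProductSpace 𝕜 E]

theorem Submodule.inner_starProjection_self (K : Submodule 𝕜 E) [K.HasOrthogonalProjection]
    (v : E) : ⟪v, K.starProjection v⟫_𝕜 = (‖K.starProjection v‖ : 𝕜) ^ 2 := by
  rw [← inner_self_eq_norm_sq_to_K, inner_starProjection_left_eq_right,
    starProjection_eq_self_iff.mpr (K.starProjection_apply_mem v)]

theorem inner_sum_smul_starProjection {ι : Type*} [Fintype ι] (K : ι → Submodule 𝕜 E)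
    [∀ i, (K i).HasOrthogonalProjection] (a : ι → ℝ) (v : E) :
    ⟪v, (∑ i, (a i : 𝕜) • (K i).starProjection) v⟫_𝕜
      = (∑ i, a i * ‖(K i).starProjection v‖ ^ 2 : ℝ) := by
  simp [inner_sum, inner_smul_right, Submodule.inner_starProjection_self]

end

theorem macro_observable_bound_general (D N : ℕ)
    (V : Fin N → Submodule ℂ (EuclideanSpace ℂ (Fin D)))
    (dv : Fin N → ℕ)
    (ψ : EuclideanSpace ℂ (Fin D))
    (ε : ℝ) (hε : 0 < ε)
    (hdev : ∀ ν : Fin N,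
      |‖((V ν).orthogonalProjectionOnto ψ : EuclideanSpace ℂ (Fin D))‖ ^ 2 - (dv ν : ℝ) / D|
        < ε * Real.sqrt ((dv ν : ℝ) / (N * D)))
    (a : Fin N → ℝ) (ha : a ≠ 0) :
    ‖(inner ℂ ψ
        ((∑ ν : Fin N, (a ν : ℂ) •
          ((V ν).subtypeL.comp ((V ν).orthogonalProjectionOnto))) ψ) : ℂ)
      - (((∑ ν : Fin N, a ν * dv ν) / D : ℝ) : ℂ)‖
    < ε * Real.sqrt ((∑ ν : Fin N, (a ν) ^ 2 * dv ν) / D) := by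
  have hdev' : ∀ ν, |‖(V ν).starProjection ψ‖ ^ 2 - dv ν / D|
      < ε * √((dv ν / D : ℝ) / Fintype.card (Fin N)) := by
    simpa only [Submodule.starProjection_apply, Fintype.card_fin, div_div, mul_comm (D : ℝ)]
      using hdev
  have hexp : inner ℂ ψ ((∑ ν, (a ν : ℂ) • (V ν).starProjection) ψ)
      = ((∑ ν, a ν * ‖(V ν).starProjection ψ‖ ^ 2 : ℝ) : ℂ) :=
    inner_sum_smul_starProjection V a ψ
  simp_rw [← Submodule.starProjection.eq_1]
  rw [hexp, ← Complex.ofReal_sub, Complex.norm_real, Real.norm_eq_abs, sum_div, sum_div]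
  simp_rw [mul_div_assoc]
  exact abs_sum_mul_sub_sum_mul_lt hε.le (fun ν ↦ by positivity) hdev' ha

/-- if `|‖P_ν ψ‖² − d_ν/D| < ε·√(d_ν/(N·D))` for all `ν`, then for every
macro-observable `A = Σ_ν α_ν P_ν` with real coefficients not all zero,
`|⟨ψ, Aψ⟩ − tr A/D| < ε·√(tr(A²)/D)`, where `tr A = Σ_ν α_ν d_ν` and
`tr(A²) = Σ_ν α_ν² d_ν`. -/
theorem macro_observable_bound (D N : ℕ) (hD : 1 ≤ D)
    (V : Fin N → Submodule ℂ (EuclideanSpace ℂ (Fin D)))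
    (horth : ∀ ν ν', ν ≠ ν' → Submodule.IsOrtho (V ν) (V ν'))
    (hspan : (⨆ ν, V ν) = ⊤)
    (dv : Fin N → ℕ) (hdim : ∀ ν, Module.finrank ℂ (V ν) = dv ν)
    (hsum : ∑ ν, dv ν = D)
    (ψ : EuclideanSpace ℂ (Fin D)) (hψ : ‖ψ‖ = 1)
    (ε : ℝ) (hε : 0 < ε)
    (hdev : ∀ ν : Fin N,
      |‖((V ν).orthogonalProjectionOnto ψ : EuclideanSpace ℂ (Fin D))‖ ^ 2 - (dv ν : ℝ) / D|
        < ε * Real.sqrt ((dv ν : ℝ) / (N * D)))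
    (a : Fin N → ℝ) (ha : a ≠ 0) :
    ‖(inner ℂ ψ
        ((∑ ν : Fin N, (a ν : ℂ) •
          ((V ν).subtypeL.comp ((V ν).orthogonalProjectionOnto))) ψ) : ℂ)
      - (((∑ ν : Fin N, a ν * dv ν) / D : ℝ) : ℂ)‖
    < ε * Real.sqrt ((∑ ν : Fin N, (a ν) ^ 2 * dv ν) / D) :=
  macro_observable_bound_general D N V dv ψ ε hε hdev a ha
end

section
/- Fix a unit vector ψ ∈ ℋ and a subspace S₀ of ℋ of dimension d (1 ≤ d ≤ D) with orthogonal projection P₀, and for U ∈ U(D) let P(U) be the orthogonal projection onto U·S₀ (so P(U) = U·P₀·U*). If U is Haar-distributed, then 𝔼[‖P(U)ψ‖²] = d/D and 𝔼[(‖P(U)ψ‖² − d/D)²] = (1/d)·(d/D)²·(D − d)/(D + 1). -/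
open MeasureTheory Filter

noncomputable section

instance (D : ℕ) : MeasurableSpace (Matrix (Fin D) (Fin D) ℂ) := borel _
instance (D : ℕ) : BorelSpace (Matrix (Fin D) (Fin D) ℂ) := ⟨rfl⟩

/-!
Write `x = U⁻¹ψ`. Then `‖P(U)ψ‖² = ‖P₀ x‖² = ∑ᵢ |⟨wᵢ, x⟩|²` for an orthonormal basis `(wᵢ)` of
`S₀`, and by right invariance of the Haar measure the law `ν` of `x` is a probability measure on
the unit sphere invariant under every unitary. Hence `𝔼|⟨u, x⟩|²` and `m = 𝔼|⟨u, x⟩|⁴` do not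
depend on the unit vector `u`, and `c = 𝔼|⟨u, x⟩|²|⟨v, x⟩|²` does not depend on the orthonormal
pair `(u, v)`. Applying the same invariance to the orthonormal pairs `(u ± v)/√2` and
`(u ± i v)/√2` gives `m = 2c`. Summing over an orthonormal basis of `ℋ`, where
`∑ᵢ |⟨bᵢ, x⟩|² = ‖x‖² = 1`, gives `D · 𝔼|⟨u, x⟩|² = 1` and `D m + D (D - 1) c = 1`. So the first
moment is `d / D`, and `𝔼‖P₀ x‖⁴ = d m + d (d - 1) c = d (d + 1) / (D (D + 1))`, from which the
variance is `d (d + 1) / (D (D + 1)) - (d / D)²`.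
-/

open Module
open scoped InnerProductSpace ComplexConjugate
open Complex (I)

theorem Complex.norm_add_sq_mul_norm_sub_sq_add (p q : ℂ) :
    ‖p + q‖ ^ 2 * ‖p - q‖ ^ 2 + ‖p + I * q‖ ^ 2 * ‖p - I * q‖ ^ 2 =
      2 * ((‖p‖ ^ 2) ^ 2 + (‖q‖ ^ 2) ^ 2) := by
  simp only [← Complex.normSq_eq_norm_sq, Complex.normSq_apply, Complex.add_re, Complex.add_im,
    Complex.sub_re, Complex.sub_im, Complex.mul_re, Complex.mul_im, Complex.I_re, Complex.I_im]
  ring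

theorem sq_div_sub_sq_div (d D : ℕ) :
    (d * (d + 1) / (D * (D + 1)) - (d / D) ^ 2 : ℝ) = 1 / d * (d / D) ^ 2 * ((D - d) / (D + 1)) := by
  rcases eq_or_ne d 0 with rfl | hd
  · simp
  rcases eq_or_ne D 0 with rfl | hD
  · simp
  field_simp
  ring

theorem Continuous.integrable_of_ae_norm_eq_one {F : Type*} [NormedAddCommGroup F] [ProperSpace F]
    [MeasurableSpace F] [BorelSpace F] {ν : Measure F} [IsFiniteMeasure ν] {f : F → ℝ}
    (hf : Continuous f) (hν1 : ∀ᵐ x ∂ν, ‖x‖ = 1) : Integrable f ν := by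
  rw [← Measure.restrict_eq_self_of_ae_mem (μ := ν) (s := Metric.sphere 0 1) (by simpa using hν1)]
  exact hf.continuousOn.integrableOn_compact (isCompact_sphere 0 1)

theorem MeasureTheory.Measure.map_mul_right_eq_self_of_isProbabilityMeasure {G : Type*} [Group G]
    [TopologicalSpace G] [IsTopologicalGroup G] [LocallyCompactSpace G] [MeasurableSpace G]
    [BorelSpace G] (μ : Measure G) [μ.IsHaarMeasure] [IsProbabilityMeasure μ] (g : G) :
    μ.map (· * g) = μ := by
  have := μ.isHaarMeasure_map_mul_right g
  have := isProbabilityMeasure_map (μ := μ) (measurable_mul_const g).aemeasurable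
  exact isHaarMeasure_eq_of_isProbabilityMeasure _ _

section Orthonormal

variable {𝕜 E ι : Type*} [RCLike 𝕜] [NormedAddCommGroup E] [InnerProductSpace 𝕜 E]
  [FiniteDimensional 𝕜 E] [Fintype ι]

theorem Orthonormal.exists_orthonormalBasis_sum_extension {u : ι → E} (hu : Orthonormal 𝕜 u) :
    ∃ b : OrthonormalBasis (ι ⊕ Fin (finrank 𝕜 E - Fintype.card ι)) 𝕜 E,
      ∀ i, b (Sum.inl i) = u i := by
  have hcard : finrank 𝕜 E = Fintype.card (ι ⊕ Fin (finrank 𝕜 E - Fintype.card ι)) := by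
    have := hu.linearIndependent.fintype_card_le_finrank
    simp only [Fintype.card_sum, Fintype.card_fin]
    omega
  obtain ⟨b, hb⟩ := Orthonormal.exists_orthonormalBasis_extension_of_card_eq hcard
    (v := Sum.elim u 0) (s := Set.range Sum.inl) <| by
      convert hu.comp _ (Equiv.ofInjective _ Sum.inl_injective).symm.injective
      funext ⟨_, i, rfl⟩
      simp
  exact ⟨b, fun i => hb _ ⟨i, rfl⟩⟩

theorem Orthonormal.exists_linearIsometryEquiv_apply_eq {u v : ι → E} (hu : Orthonormal 𝕜 u)
    (hv : Orthonormal 𝕜 v) : ∃ L : E ≃ₗᵢ[𝕜] E, ∀ i, L (u i) = v i := by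
  obtain ⟨b, hb⟩ := hu.exists_orthonormalBasis_sum_extension
  obtain ⟨b', hb'⟩ := hv.exists_orthonormalBasis_sum_extension
  exact ⟨b.equiv b' (Equiv.refl _), fun i => by
    rw [← hb, ← hb', OrthonormalBasis.equiv_apply_basis, Equiv.refl_apply]⟩

end Orthonormal

section Overlap

variable {E : Type*} [NormedAddCommGroup E] [InnerProductSpace ℂ E]

theorem Orthonormal.rotate_pair {u v : E} (huv : Orthonormal ℂ ![u, v]) {ζ : ℂ} (hζ : ‖ζ‖ = 1) :
    Orthonormal ℂ ![((√2 : ℝ) : ℂ)⁻¹ • (u + ζ • v), ((√2 : ℝ) : ℂ)⁻¹ • (u - ζ • v)] := by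
  set s : ℂ := ((√2 : ℝ) : ℂ)⁻¹
  have hζ' : conj ζ * ζ = 1 := by rw [RCLike.conj_mul, hζ]; simp
  have hs : conj s * s = 1 / 2 := by
    rw [map_inv₀, Complex.conj_ofReal, ← mul_inv, ← Complex.ofReal_mul,
      Real.mul_self_sqrt zero_le_two]
    simp
  rw [orthonormal_iff_ite] at huv ⊢
  have huu : ⟪u, u⟫_ℂ = 1 := by simpa using huv 0 0
  have hvv : ⟪v, v⟫_ℂ = 1 := by simpa using huv 1 1
  have hu_v : ⟪u, v⟫_ℂ = 0 := by simpa using huv 0 1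
  have hv_u : ⟪v, u⟫_ℂ = 0 := by simpa using huv 1 0
  intro i j
  fin_cases i <;> fin_cases j <;>
    simp only [Fin.zero_eta, Fin.mk_one, Matrix.cons_val_zero, Matrix.cons_val_one,
      inner_smul_left, inner_smul_right, inner_add_left, inner_add_right, inner_sub_left,
      inner_sub_right, huu, hvv, hu_v, hv_u, Fin.isValue, if_true, if_false, zero_ne_one,
      one_ne_zero]
  · linear_combination (conj s * s) * hζ' + 2 * hs
  · linear_combination -(conj s * s) * hζ'
  · linear_combination -(conj s * s) * hζ'
  · linear_combination (conj s * s) * hζ' + 2 * hs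

def overlap (u x : E) : ℝ := ‖⟪u, x⟫_ℂ‖ ^ 2

@[fun_prop]
theorem continuous_overlap (u : E) : Continuous (overlap u) := by
  unfold overlap
  fun_prop

theorem overlap_inv_sqrt_two_smul (w x : E) :
    overlap (((√2 : ℝ) : ℂ)⁻¹ • w) x = overlap w x / 2 := by
  have hs : ‖((√2 : ℝ) : ℂ)⁻¹‖ ^ 2 = 1 / 2 := by simp
  simp only [overlap, inner_smul_left, norm_mul, mul_pow, RCLike.norm_conj, hs]
  ring

theorem OrthonormalBasis.sum_overlap {ι : Type*} [Fintype ι] (b : OrthonormalBasis ι ℂ E)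
    (x : E) : ∑ i, overlap (b i) x = ‖x‖ ^ 2 :=
  b.sum_sq_norm_inner_right x

theorem norm_orthogonalProjectionOnto_sq_eq_sum_overlap (K : Submodule ℂ E)
    [K.HasOrthogonalProjection] {ι : Type*} [Fintype ι] (b : OrthonormalBasis ι ℂ K) (x : E) :
    ‖K.orthogonalProjectionOnto x‖ ^ 2 = ∑ i, overlap (b i : E) x := by
  rw [← b.sum_overlap]
  simp only [overlap, Submodule.inner_orthogonalProjectionOnto_eq_of_mem_left]

variable [MeasurableSpace E]

def IsUnitarilyInvariant (ν : Measure E) : Prop :=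
  ∀ L : E ≃ₗᵢ[ℂ] E, ν.map L = ν

variable {ν : Measure E}

theorem integral_pow_sum_overlap_orthonormalBasis [IsProbabilityMeasure ν]
    (hν1 : ∀ᵐ x ∂ν, ‖x‖ = 1) {ι : Type*} [Fintype ι] (b : OrthonormalBasis ι ℂ E) (n : ℕ) :
    ∫ x, (∑ i, overlap (b i) x) ^ n ∂ν = 1 := by
  rw [integral_congr_ae (g := fun _ => 1) (hν1.mono fun x hx => by simp [b.sum_overlap, hx])]
  simp

variable [BorelSpace E] [FiniteDimensional ℂ E]

theorem IsUnitarilyInvariant.integral_comp_inner_eq (hν : IsUnitarilyInvariant ν)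
    {ι : Type*} [Fintype ι] {u v : ι → E} (hu : Orthonormal ℂ u) (hv : Orthonormal ℂ v)
    (F : (ι → ℂ) → ℝ) :
    ∫ x, F (fun i => ⟪u i, x⟫_ℂ) ∂ν = ∫ x, F (fun i => ⟪v i, x⟫_ℂ) ∂ν := by
  obtain ⟨L, hL⟩ := hu.exists_linearIsometryEquiv_apply_eq hv
  conv_rhs => rw [← hν L]
  rw [MeasurableEmbedding.integral_map (f := L) L.toHomeomorph.measurableEmbedding]
  simp [← hL]

theorem IsUnitarilyInvariant.integral_comp_overlap_eq (hν : IsUnitarilyInvariant ν) {u v : E}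
    (hu : ‖u‖ = 1) (hv : ‖v‖ = 1) (g : ℝ → ℝ) :
    ∫ x, g (overlap u x) ∂ν = ∫ x, g (overlap v x) ∂ν :=
  hν.integral_comp_inner_eq (u := fun _ : Unit => u) (v := fun _ => v) (by simpa using hu)
    (by simpa using hv) fun z => g (‖z ()‖ ^ 2)

theorem IsUnitarilyInvariant.integral_overlap_mul_overlap_eq (hν : IsUnitarilyInvariant ν)
    {u v u' v' : E} (huv : Orthonormal ℂ ![u, v]) (huv' : Orthonormal ℂ ![u', v']) :
    ∫ x, overlap u x * overlap v x ∂ν = ∫ x, overlap u' x * overlap v' x ∂ν :=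
  hν.integral_comp_inner_eq huv huv' fun z => ‖z 0‖ ^ 2 * ‖z 1‖ ^ 2

theorem IsUnitarilyInvariant.integral_overlap_sq_eq_two_mul [IsFiniteMeasure ν]
    (hν : IsUnitarilyInvariant ν) (hν1 : ∀ᵐ x ∂ν, ‖x‖ = 1) {u v : E}
    (huv : Orthonormal ℂ ![u, v]) :
    ∫ x, overlap u x ^ 2 ∂ν = 2 * ∫ x, overlap u x * overlap v x ∂ν := by
  set s : ℂ := ((√2 : ℝ) : ℂ)⁻¹
  have hrot (ζ : ℂ) (hζ : ‖ζ‖ = 1) :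
      ∫ x, overlap (s • (u + ζ • v)) x * overlap (s • (u - ζ • v)) x ∂ν =
        ∫ x, overlap u x * overlap v x ∂ν :=
    hν.integral_overlap_mul_overlap_eq (huv.rotate_pair hζ) huv
  have hpoint (x : E) :
      (overlap u x ^ 2 + overlap v x ^ 2) / 2 =
        overlap (s • (u + (1 : ℂ) • v)) x * overlap (s • (u - (1 : ℂ) • v)) x +
          overlap (s • (u + (-I) • v)) x * overlap (s • (u - (-I) • v)) x := by
    simp only [s, overlap_inv_sqrt_two_smul]
    simp only [overlap, inner_add_left, inner_sub_left, inner_smul_left, map_one, map_neg,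
      Complex.conj_I, neg_neg, one_mul]
    linear_combination (-1 / 4 : ℝ) * Complex.norm_add_sq_mul_norm_sub_sq_add ⟪u, x⟫_ℂ ⟪v, x⟫_ℂ
  have hvu : ∫ x, overlap v x ^ 2 ∂ν = ∫ x, overlap u x ^ 2 ∂ν :=
    hν.integral_comp_overlap_eq (huv.norm_eq_one 1) (huv.norm_eq_one 0) (· ^ 2)
  have hint {f : E → ℝ} (hf : Continuous f) : Integrable f ν := hf.integrable_of_ae_norm_eq_one hν1
  calc ∫ x, overlap u x ^ 2 ∂ν = ∫ x, (overlap u x ^ 2 + overlap v x ^ 2) / 2 ∂ν := by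
        rw [integral_div, integral_add (hint (by fun_prop)) (hint (by fun_prop)), hvu]
        ring
    _ = 2 * ∫ x, overlap u x * overlap v x ∂ν := by
        simp_rw [hpoint]
        rw [integral_add (hint (by fun_prop)) (hint (by fun_prop)), hrot 1 (by simp),
          hrot (-I) (by simp)]
        ring

theorem IsUnitarilyInvariant.integral_overlap_mul_overlap [IsFiniteMeasure ν]
    (hν : IsUnitarilyInvariant ν) (hν1 : ∀ᵐ x ∂ν, ‖x‖ = 1) {ι : Type*} [DecidableEq ι]
    {w : ι → E} (hw : Orthonormal ℂ w) (i j : ι) {u : E} (hu : ‖u‖ = 1) :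
    ∫ x, overlap (w i) x * overlap (w j) x ∂ν =
      (if i = j then 1 else 1 / 2) * ∫ x, overlap u x ^ 2 ∂ν := by
  rw [← hν.integral_comp_overlap_eq (hw.norm_eq_one i) hu (· ^ 2)]
  split_ifs with h
  · simp [h, sq]
  · have hpair : Orthonormal ℂ ![w i, w j] := by
      simp [hw.norm_eq_one, hw.inner_eq_zero h]
    rw [hν.integral_overlap_sq_eq_two_mul hν1 hpair]
    ring

theorem IsUnitarilyInvariant.integral_sum_overlap [IsFiniteMeasure ν]
    (hν : IsUnitarilyInvariant ν) (hν1 : ∀ᵐ x ∂ν, ‖x‖ = 1) {ι : Type*} [Fintype ι]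
    {w : ι → E} (hw : Orthonormal ℂ w) {u : E} (hu : ‖u‖ = 1) :
    ∫ x, ∑ i, overlap (w i) x ∂ν = Fintype.card ι * ∫ x, overlap u x ∂ν := by
  have h (i : ι) : ∫ x, overlap (w i) x ∂ν = ∫ x, overlap u x ∂ν :=
    hν.integral_comp_overlap_eq (hw.norm_eq_one i) hu id
  rw [integral_finsetSum _ fun i _ => (continuous_overlap _).integrable_of_ae_norm_eq_one hν1]
  simp [h]

theorem IsUnitarilyInvariant.integral_sq_sum_overlap [IsFiniteMeasure ν]
    (hν : IsUnitarilyInvariant ν) (hν1 : ∀ᵐ x ∂ν, ‖x‖ = 1) {ι : Type*} [Fintype ι]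
    {w : ι → E} (hw : Orthonormal ℂ w) {u : E} (hu : ‖u‖ = 1) :
    ∫ x, (∑ i, overlap (w i) x) ^ 2 ∂ν =
      Fintype.card ι * (Fintype.card ι + 1) / 2 * ∫ x, overlap u x ^ 2 ∂ν := by
  classical
  have hint (i j : ι) : Integrable (fun x => overlap (w i) x * overlap (w j) x) ν :=
    Continuous.integrable_of_ae_norm_eq_one (by fun_prop) hν1
  have hexpand (x : E) :
      (∑ i, overlap (w i) x) ^ 2 = ∑ i, ∑ j, overlap (w i) x * overlap (w j) x := by
    rw [sq, Finset.sum_mul_sum]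
  have hdelta (i j : ι) :
      (if i = j then (1 : ℝ) else 1 / 2) = 1 / 2 + if i = j then 1 / 2 else 0 := by
    split_ifs <;> norm_num
  simp_rw [hexpand]
  rw [integral_finsetSum _ fun i _ => integrable_finsetSum _ fun j _ => hint i j]
  simp_rw [integral_finsetSum _ fun j _ => hint _ j,
    hν.integral_overlap_mul_overlap hν1 hw _ _ hu, ← Finset.sum_mul, hdelta,
    Finset.sum_add_distrib, Finset.sum_ite_eq, Finset.mem_univ, if_true, Finset.sum_const,
    Finset.card_univ, nsmul_eq_mul]
  ring

theorem IsUnitarilyInvariant.integral_overlap [IsProbabilityMeasure ν]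
    (hν : IsUnitarilyInvariant ν) (hν1 : ∀ᵐ x ∂ν, ‖x‖ = 1) {u : E} (hu : ‖u‖ = 1) :
    ∫ x, overlap u x ∂ν = 1 / finrank ℂ E := by
  have h := hν.integral_sum_overlap hν1 (stdOrthonormalBasis ℂ E).orthonormal hu
  have h1 := integral_pow_sum_overlap_orthonormalBasis hν1 (stdOrthonormalBasis ℂ E) 1
  simp only [pow_one] at h1
  rw [h1, Fintype.card_fin] at h
  exact eq_one_div_of_mul_eq_one_right h.symm

theorem IsUnitarilyInvariant.integral_overlap_sq [IsProbabilityMeasure ν]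
    (hν : IsUnitarilyInvariant ν) (hν1 : ∀ᵐ x ∂ν, ‖x‖ = 1) {u : E} (hu : ‖u‖ = 1) :
    ∫ x, overlap u x ^ 2 ∂ν = 2 / (finrank ℂ E * (finrank ℂ E + 1)) := by
  have h := hν.integral_sq_sum_overlap hν1 (stdOrthonormalBasis ℂ E).orthonormal hu
  rw [integral_pow_sum_overlap_orthonormalBasis hν1, Fintype.card_fin] at h
  rw [eq_one_div_of_mul_eq_one_right h.symm, one_div_div]

theorem IsUnitarilyInvariant.integral_norm_orthogonalProjectionOnto_sq [IsProbabilityMeasure ν]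
    (hν : IsUnitarilyInvariant ν) (hν1 : ∀ᵐ x ∂ν, ‖x‖ = 1) (K : Submodule ℂ E) :
    ∫ x, ‖K.orthogonalProjectionOnto x‖ ^ 2 ∂ν = finrank ℂ K / finrank ℂ E := by
  obtain ⟨u, hu⟩ := hν1.exists
  set b := stdOrthonormalBasis ℂ K
  have hb : Orthonormal ℂ fun i => (b i : E) := b.orthonormal.comp_linearIsometry K.subtypeₗᵢ
  simp_rw [norm_orthogonalProjectionOnto_sq_eq_sum_overlap K b,
    hν.integral_sum_overlap hν1 hb hu, hν.integral_overlap hν1 hu]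
  rw [Fintype.card_fin, mul_one_div]

theorem IsUnitarilyInvariant.integral_norm_orthogonalProjectionOnto_sq_sq
    [IsProbabilityMeasure ν] (hν : IsUnitarilyInvariant ν) (hν1 : ∀ᵐ x ∂ν, ‖x‖ = 1)
    (K : Submodule ℂ E) :
    ∫ x, (‖K.orthogonalProjectionOnto x‖ ^ 2) ^ 2 ∂ν =
      finrank ℂ K * (finrank ℂ K + 1) / (finrank ℂ E * (finrank ℂ E + 1)) := by
  obtain ⟨u, hu⟩ := hν1.exists
  set b := stdOrthonormalBasis ℂ K
  have hb : Orthonormal ℂ fun i => (b i : E) := b.orthonormal.comp_linearIsometry K.subtypeₗᵢ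
  simp_rw [norm_orthogonalProjectionOnto_sq_eq_sum_overlap K b,
    hν.integral_sq_sum_overlap hν1 hb hu, hν.integral_overlap_sq hν1 hu]
  simp
  ring

theorem IsUnitarilyInvariant.integral_norm_orthogonalProjectionOnto_sq_sub_sq
    [IsProbabilityMeasure ν] (hν : IsUnitarilyInvariant ν) (hν1 : ∀ᵐ x ∂ν, ‖x‖ = 1)
    (K : Submodule ℂ E) :
    ∫ x, (‖K.orthogonalProjectionOnto x‖ ^ 2 - finrank ℂ K / finrank ℂ E) ^ 2 ∂ν =
      1 / finrank ℂ K * (finrank ℂ K / finrank ℂ E) ^ 2 *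
        ((finrank ℂ E - finrank ℂ K) / (finrank ℂ E + 1)) := by
  have hcont : Continuous fun x => ‖K.orthogonalProjectionOnto x‖ ^ 2 := by fun_prop
  have hL2 : MemLp (fun x => ‖K.orthogonalProjectionOnto x‖ ^ 2) 2 ν :=
    (memLp_two_iff_integrable_sq hcont.aestronglyMeasurable).2
      ((hcont.pow 2).integrable_of_ae_norm_eq_one hν1)
  rw [← hν.integral_norm_orthogonalProjectionOnto_sq hν1 K,
    ← ProbabilityTheory.variance_eq_integral hcont.aemeasurable,
    ProbabilityTheory.variance_eq_sub hL2]
  simp only [Pi.pow_apply]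
  rw [hν.integral_norm_orthogonalProjectionOnto_sq_sq hν1 K,
    hν.integral_norm_orthogonalProjectionOnto_sq hν1 K, sq_div_sub_sq_div]

end Overlap

namespace Matrix.UnitaryGroup

variable {n 𝕜 : Type*} [Fintype n] [DecidableEq n] [RCLike 𝕜]

instance : CompactSpace (unitaryGroup n 𝕜) := by
  have hbdd : IsCompact (Set.univ.pi fun _ : n => Set.univ.pi fun _ : n =>
      Metric.closedBall (0 : 𝕜) 1) :=
    isCompact_univ_pi fun _ => isCompact_univ_pi fun _ => isCompact_closedBall 0 1
  exact isCompact_iff_compactSpace.mp <| hbdd.of_isClosed_subset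
    (isClosed_unitary : IsClosed (unitaryGroup n 𝕜 : Set (Matrix n n 𝕜)))
    fun _ hU i _ j _ => by simpa using entry_norm_bound_of_unitary hU i j

def toLinearIsometryEquiv :
    unitaryGroup n 𝕜 ≃* (EuclideanSpace 𝕜 n ≃ₗᵢ[𝕜] EuclideanSpace 𝕜 n) :=
  (Unitary.mapEquiv (R := Matrix n n 𝕜) (S := EuclideanSpace 𝕜 n →L[𝕜] EuclideanSpace 𝕜 n)
    ⟨(toEuclideanCLM : Matrix n n 𝕜 ≃⋆ₐ[𝕜] _).toMulEquiv,
      StarHomClass.map_star (toEuclideanCLM (𝕜 := 𝕜) (n := n))⟩).toMulEquiv.trans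
    Unitary.linearIsometryEquiv

@[simp]
theorem toLinearIsometryEquiv_apply (U : unitaryGroup n 𝕜) (x : EuclideanSpace 𝕜 n) :
    toLinearIsometryEquiv U x = toEuclideanLin (U : Matrix n n 𝕜) x :=
  rfl

theorem toLinearIsometryEquiv_symm_apply_mul (U W : unitaryGroup n 𝕜) (x : EuclideanSpace 𝕜 n) :
    (toLinearIsometryEquiv (U * W)).symm x =
      (toLinearIsometryEquiv W).symm ((toLinearIsometryEquiv U).symm x) := by
  rw [map_mul, LinearIsometryEquiv.mul_def]
  rfl

theorem continuous_toLinearIsometryEquiv_symm_apply (x : EuclideanSpace 𝕜 n) :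
    Continuous fun U : unitaryGroup n 𝕜 => (toLinearIsometryEquiv U).symm x := by
  simp only [← LinearIsometryEquiv.coe_inv, ← map_inv, toLinearIsometryEquiv_apply,
    Matrix.toLpLin_apply]
  fun_prop

theorem norm_orthogonalProjectionOnto_map (U : unitaryGroup n 𝕜)
    (K : Submodule 𝕜 (EuclideanSpace 𝕜 n)) (x : EuclideanSpace 𝕜 n) :
    ‖((K.map (toEuclideanLin (U : Matrix n n 𝕜))).orthogonalProjectionOnto x :
        EuclideanSpace 𝕜 n)‖ =
      ‖K.orthogonalProjectionOnto ((toLinearIsometryEquiv U).symm x)‖ :=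
  (congrArg norm (K.starProjection_map_apply (toLinearIsometryEquiv U) x)).trans
    ((toLinearIsometryEquiv U).norm_map _)

theorem isUnitarilyInvariant_map_symm_apply {D : ℕ} (μ : Measure (unitaryGroup (Fin D) ℂ))
    [μ.IsHaarMeasure] [IsProbabilityMeasure μ] (ψ : EuclideanSpace ℂ (Fin D)) :
    IsUnitarilyInvariant (μ.map fun U => (toLinearIsometryEquiv U).symm ψ) := by
  intro L
  have hX := continuous_toLinearIsometryEquiv_symm_apply (𝕜 := ℂ) ψ
  set W := toLinearIsometryEquiv.symm L⁻¹ with hW_def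
  have hW : ⇑L ∘ (fun U => (toLinearIsometryEquiv U).symm ψ) =
      (fun U => (toLinearIsometryEquiv U).symm ψ) ∘ (· * W) := by
    funext U
    rw [Function.comp_apply, Function.comp_apply, toLinearIsometryEquiv_symm_apply_mul, hW_def,
      MulEquiv.apply_symm_apply, LinearIsometryEquiv.inv_def, LinearIsometryEquiv.symm_symm]
  rw [Measure.map_map L.continuous.measurable hX.measurable, hW,
    ← Measure.map_map hX.measurable (measurable_mul_const W),
    μ.map_mul_right_eq_self_of_isProbabilityMeasure]

end Matrix.UnitaryGroup

open Matrix.UnitaryGroup in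
theorem moments_random_subspace_general (D d : ℕ)
    (ψ : EuclideanSpace ℂ (Fin D)) (hψ : ‖ψ‖ = 1)
    (S₀ : Submodule ℂ (EuclideanSpace ℂ (Fin D))) (hS₀ : Module.finrank ℂ S₀ = d)
    (μU : Measure (Matrix.unitaryGroup (Fin D) ℂ))
    (hHaar : μU.IsHaarMeasure) (hProb : IsProbabilityMeasure μU) :
    (∫ U : Matrix.unitaryGroup (Fin D) ℂ,
        ‖(Submodule.orthogonalProjectionOnto
            (Submodule.map (Matrix.toEuclideanLin (U : Matrix (Fin D) (Fin D) ℂ)) S₀)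
            ψ : EuclideanSpace ℂ (Fin D))‖ ^ 2 ∂μU
      = (d : ℝ) / D)
    ∧
    (∫ U : Matrix.unitaryGroup (Fin D) ℂ,
        (‖(Submodule.orthogonalProjectionOnto
            (Submodule.map (Matrix.toEuclideanLin (U : Matrix (Fin D) (Fin D) ℂ)) S₀)
            ψ : EuclideanSpace ℂ (Fin D))‖ ^ 2 - (d : ℝ) / D) ^ 2 ∂μU
      = (1 / (d : ℝ)) * ((d : ℝ) / D) ^ 2 * (((D : ℝ) - d) / ((D : ℝ) + 1))) := by
  set X := fun U : Matrix.unitaryGroup (Fin D) ℂ => (toLinearIsometryEquiv U).symm ψ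
  have hX : Continuous X := continuous_toLinearIsometryEquiv_symm_apply ψ
  have := Measure.isProbabilityMeasure_map (μ := μU) hX.aemeasurable
  have hν : IsUnitarilyInvariant (μU.map X) := isUnitarilyInvariant_map_symm_apply μU ψ
  have hν1 : ∀ᵐ x ∂(μU.map X), ‖x‖ = 1 :=
    (ae_map_iff hX.aemeasurable (measurableSet_eq_fun measurable_norm measurable_const)).2
      (ae_of_all _ fun U => by simp [X, hψ])
  have hlaw (f : ℝ → ℝ) (hf : Continuous f) :
      ∫ U, f ‖(Submodule.orthogonalProjectionOnto
          (Submodule.map (Matrix.toEuclideanLin (U : Matrix (Fin D) (Fin D) ℂ)) S₀)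
            ψ : EuclideanSpace ℂ (Fin D))‖ ∂μU =
        ∫ x, f ‖S₀.orthogonalProjectionOnto x‖ ∂(μU.map X) := by
    rw [integral_map hX.aemeasurable (by fun_prop : Continuous _).aestronglyMeasurable]
    simp_rw [X, norm_orthogonalProjectionOnto_map]
  have h1 := hν.integral_norm_orthogonalProjectionOnto_sq hν1 S₀
  have h2 := hν.integral_norm_orthogonalProjectionOnto_sq_sub_sq hν1 S₀
  rw [hS₀, finrank_euclideanSpace_fin] at h1 h2
  exact ⟨(hlaw (· ^ 2) (by fun_prop)).trans h1,
    (hlaw (fun t => (t ^ 2 - d / D) ^ 2) (by fun_prop)).trans h2⟩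

/-- 'unitary inversion' moments: for a fixed unit vector `ψ` and a fixed
`d`-dimensional subspace `S₀`, with `P(U)` the projection onto `U·S₀` and Haar-distributed
`U`, one has `𝔼‖P(U)ψ‖² = d/D` and `𝔼(‖P(U)ψ‖² − d/D)² = (1/d)(d/D)²(D−d)/(D+1)`. -/
theorem moments_random_subspace (D d : ℕ) (hD : 1 ≤ D) (hd : 1 ≤ d) (hdD : d ≤ D)
    (ψ : EuclideanSpace ℂ (Fin D)) (hψ : ‖ψ‖ = 1)
    (S₀ : Submodule ℂ (EuclideanSpace ℂ (Fin D))) (hS₀ : Module.finrank ℂ S₀ = d)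
    (μU : Measure (Matrix.unitaryGroup (Fin D) ℂ))
    (hHaar : μU.IsHaarMeasure) (hProb : IsProbabilityMeasure μU) :
    (∫ U : Matrix.unitaryGroup (Fin D) ℂ,
        ‖(Submodule.orthogonalProjectionOnto
            (Submodule.map (Matrix.toEuclideanLin (U : Matrix (Fin D) (Fin D) ℂ)) S₀)
            ψ : EuclideanSpace ℂ (Fin D))‖ ^ 2 ∂μU
      = (d : ℝ) / D)
    ∧
    (∫ U : Matrix.unitaryGroup (Fin D) ℂ,
        (‖(Submodule.orthogonalProjectionOnto
            (Submodule.map (Matrix.toEuclideanLin (U : Matrix (Fin D) (Fin D) ℂ)) S₀)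
            ψ : EuclideanSpace ℂ (Fin D))‖ ^ 2 - (d : ℝ) / D) ^ 2 ∂μU
      = (1 / (d : ℝ)) * ((d : ℝ) / D) ^ 2 * (((D : ℝ) - d) / ((D : ℝ) + 1))) :=
  moments_random_subspace_general D d ψ hψ S₀ hS₀ μU hHaar hProb
end
end
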